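/- arXiv:1304.2506 — 2 statements merged into one kernel-verified Lean document; each statement's English description precedes it below -/
import Mathlib

section
/- Let L be a field, n, k ≥ 2. Define A_k = I_n, A_i = 0 for 2 ≤ i ≤ k−1, A_1 the n×n matrix whose only nonzero entry is (A_1)_{1,n} = (−1)^n, and A_0 the n×n matrix with (A_0)_{i+1,i} = 1 for 1 ≤ i ≤ n−1, (A_0)_{1,n} = (−1)^n, and all other entries 0. Then det(λ^k A_k + λ A_1 + A_0) = λ^{nk} − λ − 1 as a polynomial in λ. -/
open Polynomial

lemma aux9 {R : Type*} [CommRing R] (m : ℕ) (hm : 1 ≤ m) (d c : R) :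
    (Matrix.of fun i j : Fin (m+1) =>
      if (i:ℕ) = j then d else if (i:ℕ) = (j:ℕ) + 1 then 1
      else if (i:ℕ) = 0 ∧ (j:ℕ) = m then c else 0).det
      = d ^ (m+1) + (-1)^m * c := by
  set M : Matrix (Fin (m+1)) (Fin (m+1)) R := Matrix.of fun i j : Fin (m+1) =>
      if (i:ℕ) = j then d else if (i:ℕ) = (j:ℕ) + 1 then 1
      else if (i:ℕ) = 0 ∧ (j:ℕ) = m then c else 0 with hM
  have hMe : ∀ i j : Fin (m+1), M i j =
      if (i:ℕ) = j then d else if (i:ℕ) = (j:ℕ) + 1 then 1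
      else if (i:ℕ) = 0 ∧ (j:ℕ) = m then c else 0 := fun i j => rfl
  rw [Matrix.det_succ_row_zero]
  set f : Fin (m+1) → R := fun j => (-1)^(j:ℕ) * M 0 j * (M.submatrix Fin.succ j.succAbove).det
    with hf
  have h0last : (0 : Fin (m+1)) ≠ Fin.last m := by
    simp [Fin.ext_iff]; omega
  have hzero : ∀ j : Fin (m+1), j ≠ 0 → j ≠ Fin.last m → f j = 0 := by
    intro j hj0 hjl
    have h1 : (j:ℕ) ≠ 0 := fun h => hj0 (Fin.ext (by simp [h]))
    have h2 : (j:ℕ) ≠ m := by simpa [Fin.ext_iff, Fin.val_last] using hjl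
    have : M 0 j = 0 := by
      rw [hMe]
      simp only [Fin.val_zero]
      split_ifs <;> first | rfl | (exfalso; omega) | (exfalso; tauto)
    simp [hf, this]
  have hsum : ∑ j : Fin (m+1), f j = f 0 + f (Fin.last m) := by
    rw [← Finset.add_sum_erase _ f (Finset.mem_univ 0)]
    congr 1
    refine Finset.sum_eq_single_of_mem _ ?_ ?_
    · simp [Finset.mem_erase, h0last.symm]
    · intro b hb hbl
      exact hzero b (Finset.mem_erase.mp hb).1 hbl
  rw [hsum]
  have hd00 : M 0 0 = d := by rw [hMe]; simp
  have h0l : M 0 (Fin.last m) = c := by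
    rw [hMe]
    simp only [Fin.val_zero, Fin.val_last]
    split_ifs <;> first | rfl | (exfalso; omega) | (exfalso; tauto)
  have hminor0 : (M.submatrix Fin.succ (Fin.succAbove 0)).det = d ^ m := by
    have htri : (M.submatrix Fin.succ (Fin.succAbove 0)).BlockTriangular OrderDual.toDual := by
      intro i j hij
      have hij' : (i:ℕ) < (j:ℕ) := hij
      simp only [Matrix.submatrix_apply, Fin.succAbove_zero, Fin.succ]
      rw [hMe]
      simp only [Fin.val_succ, Fin.val_mk]
      split_ifs <;> first | rfl | (exfalso; omega) | (exfalso; tauto)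
    rw [Matrix.det_of_lowerTriangular _ htri]
    have hdiag : ∀ i : Fin m, M.submatrix Fin.succ (Fin.succAbove 0) i i = d := by
      intro i
      simp only [Matrix.submatrix_apply, Fin.succAbove_zero]
      rw [hMe]
      simp [Fin.val_succ]
    rw [Finset.prod_congr rfl (fun i _ => hdiag i)]
    simp
  have hminorl : (M.submatrix Fin.succ (Fin.succAbove (Fin.last m))).det = 1 := by
    have htri : (M.submatrix Fin.succ (Fin.succAbove (Fin.last m))).BlockTriangular id := by
      intro i j hij
      have hij' : (j:ℕ) < (i:ℕ) := hij
      simp only [Matrix.submatrix_apply, Fin.succAbove_last]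
      rw [hMe]
      simp only [Fin.val_succ, Fin.coe_castSucc]
      split_ifs <;> first | rfl | (exfalso; omega) | (exfalso; tauto)
    rw [Matrix.det_of_upperTriangular htri]
    have hdiag : ∀ i : Fin m, M.submatrix Fin.succ (Fin.succAbove (Fin.last m)) i i = 1 := by
      intro i
      simp only [Matrix.submatrix_apply, Fin.succAbove_last]
      rw [hMe]
      simp only [Fin.val_succ, Fin.coe_castSucc]
      split_ifs <;> first | rfl | (exfalso; omega) | (exfalso; tauto)
    rw [Finset.prod_congr rfl (fun i _ => hdiag i)]
    simp
  rw [hf]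
  simp only [hd00, h0l, hminor0, hminorl, Fin.val_zero, Fin.val_last, pow_zero, one_mul, mul_one]
  ring

open Polynomial in
theorem stmt_9 {L : Type*} [Field L] (n k : ℕ) (hn : 2 ≤ n) (hk : 2 ≤ k)
    (A₁ A₀ : Matrix (Fin n) (Fin n) L[X])
    (hA₁ : A₁ = Matrix.of fun i j : Fin n =>
        if i.val = 0 ∧ j.val = n - 1 then (-1 : L[X]) ^ n else 0)
    (hA₀ : A₀ = Matrix.of fun i j : Fin n =>
        if i.val = j.val + 1 then 1
        else if i.val = 0 ∧ j.val = n - 1 then (-1 : L[X]) ^ n else 0) :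
    (((X : L[X]) ^ k) • (1 : Matrix (Fin n) (Fin n) L[X]) + (X : L[X]) • A₁ + A₀).det =
      X ^ (n * k) - X - 1 := by
  subst hA₁ hA₀
  obtain ⟨m, rfl⟩ : ∃ m, n = m + 1 := ⟨n - 1, by omega⟩
  have hm : 1 ≤ m := by omega
  have hME : (((X : L[X]) ^ k) • (1 : Matrix (Fin (m+1)) (Fin (m+1)) L[X])
      + (X : L[X]) • (Matrix.of fun i j : Fin (m+1) =>
        if i.val = 0 ∧ j.val = m + 1 - 1 then (-1 : L[X]) ^ (m+1) else 0)
      + (Matrix.of fun i j : Fin (m+1) =>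
        if i.val = j.val + 1 then 1
        else if i.val = 0 ∧ j.val = m + 1 - 1 then (-1 : L[X]) ^ (m+1) else 0))
      = Matrix.of (fun i j : Fin (m+1) =>
      if (i:ℕ) = j then X ^ k else if (i:ℕ) = (j:ℕ) + 1 then 1
      else if (i:ℕ) = 0 ∧ (j:ℕ) = m then ((-1 : L[X]) ^ (m+1)) * (X + 1) else 0) := by
    refine Matrix.ext fun i j => ?_
    have hi := i.isLt
    have hj := j.isLt
    simp only [Matrix.add_apply, Matrix.smul_apply, Matrix.one_apply, Matrix.of_apply,
      smul_eq_mul, Nat.add_sub_cancel, Fin.ext_iff]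
    split_ifs <;> first | ring1 | (exfalso; omega) | (exfalso; tauto)
  rw [hME, aux9 m hm]
  have h1 : ((X : L[X]) ^ k) ^ (m+1) = X ^ ((m+1) * k) := by
    rw [← pow_mul, mul_comm]
  have h2 : ((-1 : L[X]))^m * ((-1 : L[X]) ^ (m+1) * (X + 1)) = -(X+1) := by
    rw [← mul_assoc, ← pow_add]
    have hodd : Odd (m + (m+1)) := ⟨m, by omega⟩
    rw [hodd.neg_one_pow]
    ring
  rw [h1, h2]
  ring
end

section
/- The only matrix X ∈ M_2(ℂ) satisfying X·[[0,1],[1,1]]·X − [[0,1],[0,0]]·X + X·[[0,1],[0,0]] = 0 is X = 0. -/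
theorem stmt_19 (X : Matrix (Fin 2) (Fin 2) ℂ) :
    X * !![(0 : ℂ), 1; 1, 1] * X - !![(0 : ℂ), 1; 0, 0] * X + X * !![(0 : ℂ), 1; 0, 0] = 0 ↔
      X = 0 := by
  constructor
  · intro h
    set a := X 0 0 with ha
    set b := X 0 1 with hb
    set c := X 1 0 with hc
    set d := X 1 1 with hd
    have h1 : a*b + a*c + b*c - c = 0 := by
      have := congrFun (congrFun h 0) 0
      simp [Matrix.mul_apply, Matrix.vecMul, dotProduct, Fin.sum_univ_two, ← ha, ← hb, ← hc, ← hd] at this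
      linear_combination this
    have h2 : a + b^2 + a*d + b*d - d = 0 := by
      have := congrFun (congrFun h 0) 1
      simp [Matrix.mul_apply, Matrix.vecMul, dotProduct, Fin.sum_univ_two, ← ha, ← hb, ← hc, ← hd] at this
      linear_combination this
    have h4 : a*d + c^2 + c*d = 0 := by
      have := congrFun (congrFun h 1) 0
      simp [Matrix.mul_apply, Matrix.vecMul, dotProduct, Fin.sum_univ_two, ← ha, ← hb, ← hc, ← hd] at this
      linear_combination this
    have h3 : c + b*d + c*d + d^2 = 0 := by
      have := congrFun (congrFun h 1) 1
      simp [Matrix.mul_apply, Matrix.vecMul, dotProduct, Fin.sum_univ_two, ← ha, ← hb, ← hc, ← hd] at this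
      linear_combination this
    have hd0 : d = 0 := by
      by_contra hdne
      have k1 : c * (c - d) * (c + d) = 0 := by
        linear_combination d^2*h1 + c^2*h3 + (-b*d - c*d)*h4
      have k2 : c^2*(1+d) - d^3 = 0 := by
        linear_combination d^2*h2 + (c + c*d - b*d)*h3 + (-d - d^2)*h4
      rcases mul_eq_zero.1 k1 with k | k
      · rcases mul_eq_zero.1 k with k | k
        · -- c = 0
          have : d^3 = 0 := by linear_combination -k2 + (1+d)*c*k
          exact hdne (pow_eq_zero_iff (by norm_num)|>.1 this)
        · -- c = d
          have : d^2 = 0 := by linear_combination k2 - (c+d)*(1+d)*k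
          exact hdne (pow_eq_zero_iff (by norm_num)|>.1 this)
      · -- c = -d
        have : d^2 = 0 := by linear_combination k2 + (d-c)*(1+d)*k
        exact hdne (pow_eq_zero_iff (by norm_num)|>.1 this)
    have hc0 : c = 0 := by linear_combination h3 - (b + c + d)*hd0
    have hb0 : b = 0 := by
      have h3' : b^3 = 0 := by
        linear_combination b*h2 - (1+d)*h1 + (b - b^2)*hd0 + (a + b + a*d + b*d - d - 1)*hc0
      exact pow_eq_zero_iff (by norm_num)|>.1 h3'
    have ha0 : a = 0 := by linear_combination h2 - b*hb0 - (a+b-1)*hd0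
    ext i j
    fin_cases i <;> fin_cases j <;> simp [← ha, ← hb, ← hc, ← hd] <;> assumption
  · intro h; subst h; simp
end
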